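/- Let n = 2 and q = −1, so T_2(−1) is the Sweedler Hopf algebra. Let A = k[u]/(u² − 1) be equipped with the T_2(−1)-module-algebra structure (σ, δ) determined by σ(u) = −u and δ(u) = γ·1_A for some nonzero γ ∈ k. Then for every λ ∈ k there exists an extension (τ, δ') of (σ, δ) to a D(T_2(−1))-module-algebra structure on A with τ(u) = −u and δ'(u) = λ·1_A; and conversely every extension (τ, δ') of (σ, δ) to a D(T_2(−1))-module-algebra structure on A satisfies τ(u) = −u and δ'(u) = λ·1_A for some λ ∈ k. -/

import Mathlib

/-!
Since `A` is commutative, the `σ`-twisted Leibniz rule of `δ` is also the rule required of `δ'`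
with `τ = σ`, and for `q² = 1` the pair `(σ, c • δ)` satisfies every relation of the double;
taking `c = μ / γ` gives `δ' u = μ`.

Conversely, `τ` commutes with `σ`, so `τ u` lies in the `(-1)`-eigenspace `k u` of `σ`, and the
relation `δ τ = -τ δ` evaluated at `u` pins the scalar to `-1`. The relation `σ δ' = -δ' σ` makes
`δ' u` a fixed point of `σ`, and the fixed points of `σ` are the scalars.
-/

/-- The data of an extension of a `T_n(q)`-module-algebra structure `(σ, δ)` on `A`
to a `D(T_n(q))`-module-algebra structure, given by the actions `τ` of the grouplike `G`
and `δ'` of the `(1,G)`-skew primitive `X` of the Drinfel'd double. -/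
def IsDTaftExtension {k A : Type*} [Field k] [CommRing A] [Algebra k A]
    (n : ℕ) (q : k) (σ : A ≃ₐ[k] A) (δ : A →ₗ[k] A)
    (τ : A ≃ₐ[k] A) (δ' : A →ₗ[k] A) : Prop :=
  τ ^ n = 1 ∧ δ' 1 = 0 ∧
  (∀ a b : A, δ' (a * b) = a * δ' b + δ' a * τ b) ∧
  δ' ^ n = 0 ∧
  τ.toLinearMap ∘ₗ δ' = q • (δ' ∘ₗ τ.toLinearMap) ∧
  σ * τ = τ * σ ∧
  δ ∘ₗ τ.toLinearMap = q • (τ.toLinearMap ∘ₗ δ) ∧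
  σ.toLinearMap ∘ₗ δ' = q⁻¹ • (δ' ∘ₗ σ.toLinearMap) ∧
  δ ∘ₗ δ' - δ' ∘ₗ δ = τ.toLinearMap - σ.toLinearMap

section TwistedDerivation

variable {k A : Type*} [Field k] [CommRing A] [Algebra k A] {σ : A ≃ₐ[k] A} {δ : A →ₗ[k] A}

theorem leibniz_swap_of_comm (hleib : ∀ a c : A, δ (a * c) = σ a * δ c + δ a * c) (a c : A) :
    δ (a * c) = a * δ c + δ a * σ c := by
  rw [mul_comm a c, hleib]
  ring

theorem isDTaftExtension_self_smul {n : ℕ} {q : k} (hq : q ^ 2 = 1)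
    (hσn : σ ^ n = 1) (hδ1 : δ 1 = 0)
    (hleib : ∀ a c : A, δ (a * c) = σ a * δ c + δ a * c) (hδn : δ ^ n = 0)
    (hcomm : σ.toLinearMap ∘ₗ δ = q • (δ ∘ₗ σ.toLinearMap)) (c : k) :
    IsDTaftExtension n q σ δ σ (c • δ) := by
  have hqinv : q⁻¹ = q := inv_eq_of_mul_eq_one_right (by rw [← sq, hq])
  have hcomm' : δ ∘ₗ σ.toLinearMap = q • (σ.toLinearMap ∘ₗ δ) := by
    rw [hcomm, smul_smul, ← sq, hq, one_smul]
  refine ⟨hσn, by simp [hδ1], fun a b => ?_, ?_, ?_, rfl, hcomm', ?_, ?_⟩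
  · simp only [LinearMap.smul_apply, leibniz_swap_of_comm hleib, smul_add, mul_smul_comm,
      smul_mul_assoc]
  · rw [smul_pow, hδn, smul_zero]
  · rw [LinearMap.comp_smul, LinearMap.smul_comp, hcomm, smul_comm]
  · rw [LinearMap.comp_smul, LinearMap.smul_comp, hcomm, hqinv, smul_comm]
  · rw [LinearMap.comp_smul, LinearMap.smul_comp, sub_self, sub_self]

end TwistedDerivation

section TwoDimensional

variable {k A : Type*} [Field k] [Ring A] [Algebra k A] {u : A}
  (b : Module.Basis (Fin 2) k A) (hb : ∀ i : Fin 2, b i = u ^ (i : ℕ))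
include hb

theorem exists_eq_smul_one_add_smul (a : A) : ∃ x y : k, a = x • (1 : A) + y • u := by
  refine ⟨b.repr a 0, b.repr a 1, ?_⟩
  simpa [Fin.sum_univ_two, hb] using (b.sum_repr a).symm

theorem exists_eq_smul_one_of_map_eq [NeZero (2 : k)] {σ : A ≃ₐ[k] A} (hσu : σ u = -u)
    {a : A} (ha : σ a = a) :
    ∃ x : k, a = x • (1 : A) := by
  obtain ⟨x, y, rfl⟩ := exists_eq_smul_one_add_smul b hb a
  have hu : u ≠ 0 := by simpa [hb] using b.ne_zero 1
  have hy : (2 * y) • u = 0 := by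
    simp only [map_add, map_smul, map_one, hσu, smul_neg] at ha
    rw [two_mul, add_smul]
    linear_combination (norm := module) -ha
  obtain rfl : y = 0 := by simpa [hu, two_ne_zero] using hy
  exact ⟨x, by simp⟩

theorem exists_eq_smul_of_map_eq_neg [NeZero (2 : k)] {σ : A ≃ₐ[k] A} (hσu : σ u = -u)
    {a : A} (ha : σ a = -a) :
    ∃ y : k, a = y • u := by
  obtain ⟨x, y, rfl⟩ := exists_eq_smul_one_add_smul b hb a
  have h1 : (1 : A) ≠ 0 := by simpa [hb] using b.ne_zero 0
  have hx : (2 * x) • (1 : A) = 0 := by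
    simp only [map_add, map_smul, map_one, hσu, smul_neg] at ha
    rw [two_mul, add_smul]
    linear_combination (norm := module) ha
  obtain rfl : x = 0 := by simpa [h1, two_ne_zero] using hx
  exact ⟨y, by simp⟩

end TwoDimensional

namespace IsDTaftExtension

variable {k A : Type*} [Field k] [NeZero (2 : k)] [CommRing A] [Algebra k A] {u : A}
  (b : Module.Basis (Fin 2) k A) (hb : ∀ i : Fin 2, b i = u ^ (i : ℕ))
  {n : ℕ} {σ τ : A ≃ₐ[k] A} {δ δ' : A →ₗ[k] A}
include hb

theorem map_eq_neg (h : IsDTaftExtension n (-1) σ δ τ δ') {γ : k} (hγ : γ ≠ 0)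
    (hσu : σ u = -u) (hδu : δ u = γ • (1 : A)) : τ u = -u := by
  obtain ⟨-, -, -, -, -, hστ, hδτ, -, -⟩ := h
  have hστu : σ (τ u) = -τ u := by
    rw [← AlgEquiv.mul_apply, hστ, AlgEquiv.mul_apply, hσu, map_neg]
  obtain ⟨y, hy⟩ := exists_eq_smul_of_map_eq_neg b hb hσu hστu
  have h1 : (1 : A) ≠ 0 := by simpa [hb] using b.ne_zero 0
  have hyγ : (y * γ) • (1 : A) = (-1 * γ) • 1 := by
    have := LinearMap.congr_fun hδτ u
    simp only [LinearMap.comp_apply, AlgEquiv.toLinearMap_apply, LinearMap.smul_apply, hy,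
      map_smul, hδu, map_one] at this
    rw [mul_smul, mul_smul, this]
  rw [hy, mul_right_cancel₀ hγ (smul_left_injective k h1 hyγ), neg_one_smul]

theorem exists_map_eq_smul_one (h : IsDTaftExtension n (-1) σ δ τ δ') (hσu : σ u = -u) :
    ∃ μ : k, δ' u = μ • (1 : A) := by
  obtain ⟨-, -, -, -, -, -, -, hσδ', -⟩ := h
  refine exists_eq_smul_one_of_map_eq b hb hσu ?_
  have := LinearMap.congr_fun hσδ' u
  simpa [hσu] using this

end IsDTaftExtension

theorem stmt_6 (k : Type*) [Field k] [CharZero k]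
    (γ : k) (hγ : γ ≠ 0)
    (A : Type*) [CommRing A] [Algebra k A]
    (u : A) (b : Module.Basis (Fin 2) k A) (hb : ∀ i : Fin 2, b i = u ^ (i : ℕ))
    (σ : A ≃ₐ[k] A) (δ : A →ₗ[k] A)
    (hσn : σ ^ 2 = 1) (hδ1 : δ 1 = 0)
    (hleib : ∀ a c : A, δ (a * c) = σ a * δ c + δ a * c)
    (hδn : δ ^ 2 = 0)
    (hcomm : σ.toLinearMap ∘ₗ δ = (-1 : k) • (δ ∘ₗ σ.toLinearMap))
    (hσu : σ u = -u) (hδu : δ u = γ • (1 : A)) :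
    (∀ μ : k, ∃ (τ : A ≃ₐ[k] A) (δ' : A →ₗ[k] A),
        IsDTaftExtension 2 (-1 : k) σ δ τ δ' ∧
        τ u = -u ∧ δ' u = μ • (1 : A)) ∧
    (∀ (τ : A ≃ₐ[k] A) (δ' : A →ₗ[k] A),
        IsDTaftExtension 2 (-1 : k) σ δ τ δ' →
        τ u = -u ∧ ∃ μ : k, δ' u = μ • (1 : A)) := by
  refine ⟨fun μ => ⟨σ, (μ / γ) • δ, ?_, hσu, ?_⟩, fun τ δ' h => ?_⟩
  · exact isDTaftExtension_self_smul neg_one_sq hσn hδ1 hleib hδn hcomm _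
  · rw [LinearMap.smul_apply, hδu, smul_smul, div_mul_cancel₀ _ hγ]
  · exact ⟨h.map_eq_neg b hb hγ hσu hδu, h.exists_map_eq_smul_one b hb hσu⟩
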